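/- arXiv:1912.08376 — 2 statements merged into one kernel-verified Lean document; each statement's English description precedes it below -/
import Mathlib

section
/- The best constant c in the inequality ‖∇u‖_∞ ≤ c·|Ω|^{1/2}, valid for all bounded convex planar Ω with u the torsion function (-Δu = 1, u = 0 on ∂Ω), satisfies c ≥ 3^{3/4}/(4√π). -/
open Real MeasureTheory

noncomputable def planeLaplacian (u : EuclideanSpace ℝ (Fin 2) → ℝ)
    (x : EuclideanSpace ℝ (Fin 2)) : ℝ :=
  ∑ i : Fin 2, fderiv ℝ (fun y => fderiv ℝ u y (EuclideanSpace.single i 1)) x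
    (EuclideanSpace.single i 1)

/-!
On the ellipse `a x² + (1 - a) y² < 2` the torsion function is explicit,
`u = 1 - (a x² + (1 - a) y²) / 2`. Near the vertex `(√(2 / a), 0)` its gradient has norm close to
`√(2a)`, while the area of the ellipse is `2π / √(a (1 - a))`. Hence every admissible constant is at
least `√(2a) / √(2π / √(a (1 - a))) = √a (a (1 - a))^{1/4} / √π`, and at the maximizing parameter
`a = 3/4` this is `3^{3/4} / (4√π)`.
-/

open EuclideanSpace

local notation "ℝ²" => EuclideanSpace ℝ (Fin 2)

section Ellipse

variable (a b : ℝ)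

def ellipseForm (x : ℝ²) : ℝ := a * x 0 ^ 2 + b * x 1 ^ 2

def ellipse : Set ℝ² := {x | ellipseForm a b x < 2}

noncomputable def ellipseTorsion (x : ℝ²) : ℝ := 1 - ellipseForm a b x / 2

noncomputable def ellipseNormalizer : ℝ² →ₗ[ℝ] ℝ² :=
  Matrix.toLpLin 2 2 (Matrix.diagonal ![√(a / 2), √(b / 2)])

theorem hasFDerivAt_ellipseTorsion (p : ℝ²) :
    HasFDerivAt (ellipseTorsion a b)
      (-((a * p 0) • proj (𝕜 := ℝ) 0 + (b * p 1) • proj (𝕜 := ℝ) 1)) p := by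
  have h0 : HasFDerivAt (fun x : ℝ² => x 0) (proj (𝕜 := ℝ) 0) p := (proj (𝕜 := ℝ) 0).hasFDerivAt
  have h1 : HasFDerivAt (fun x : ℝ² => x 1) (proj (𝕜 := ℝ) 1) p := (proj (𝕜 := ℝ) 1).hasFDerivAt
  have h := ((((h0.pow 2).const_mul a).add ((h1.pow 2).const_mul b)).mul_const 2⁻¹).const_sub 1
  refine (h.congr_fderiv ?_).congr_of_eventuallyEq (.of_forall fun x => ?_)
  · ext v
    simp only [Nat.add_one_sub_one, pow_one, nsmul_eq_mul, Nat.cast_ofNat, smul_add, neg_add_rev,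
      add_apply, neg_apply, smul_apply, PiLp.proj_apply, smul_eq_mul]
    ring
  · simp [ellipseTorsion, ellipseForm, div_eq_mul_inv]

theorem fderiv_ellipseTorsion_single (p : ℝ²) (i : Fin 2) :
    fderiv ℝ (ellipseTorsion a b) p (single i 1) = -(![a, b] i * p i) := by
  rw [(hasFDerivAt_ellipseTorsion a b p).fderiv]
  fin_cases i <;> simp

theorem planeLaplacian_ellipseTorsion (x : ℝ²) :
    planeLaplacian (ellipseTorsion a b) x = -(a + b) := by
  have hpartial (i : Fin 2) : HasFDerivAt (fun y => fderiv ℝ (ellipseTorsion a b) y (single i 1))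
      (-(![a, b] i • proj (𝕜 := ℝ) i)) x := by
    simp_rw [fderiv_ellipseTorsion_single]
    exact ((proj (𝕜 := ℝ) i).hasFDerivAt.const_mul (![a, b] i)).fun_neg
  simp [planeLaplacian, (hpartial _).fderiv]

theorem contDiff_ellipseTorsion : ContDiff ℝ 2 (ellipseTorsion a b) := by
  unfold ellipseTorsion ellipseForm
  fun_prop

theorem continuous_ellipseForm : Continuous (ellipseForm a b) := by
  unfold ellipseForm
  fun_prop

theorem isOpen_ellipse : IsOpen (ellipse a b) :=
  isOpen_lt (continuous_ellipseForm a b) continuous_const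

theorem ellipseTorsion_eq_zero_of_mem_frontier {x : ℝ²} (hx : x ∈ frontier (ellipse a b)) :
    ellipseTorsion a b x = 0 := by
  have hx : ellipseForm a b x = 2 :=
    frontier_lt_subset_eq (continuous_ellipseForm a b) continuous_const hx
  simp [ellipseTorsion, hx]

variable {a b}

theorem abs_mul_le_norm_fderiv_ellipseTorsion (p : ℝ²) :
    |a * p 0| ≤ ‖fderiv ℝ (ellipseTorsion a b) p‖ := by
  simpa [fderiv_ellipseTorsion_single] using
    (fderiv ℝ (ellipseTorsion a b) p).le_opNorm (single 0 1)

theorem single_zero_mem_ellipse {r : ℝ} (hr : a * r ^ 2 < 2) : single 0 r ∈ ellipse a b := by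
  simpa [ellipse, ellipseForm] using hr

theorem convex_ellipse (ha : 0 ≤ a) (hb : 0 ≤ b) : Convex ℝ (ellipse a b) := by
  have hsq : ConvexOn ℝ Set.univ (fun t : ℝ => t ^ 2) := Even.convexOn_pow even_two
  simpa [ellipse, ellipseForm] using
    (((hsq.comp_linearMap (projₗ 0)).smul ha).add ((hsq.comp_linearMap (projₗ 1)).smul hb)).convex_lt 2

theorem isBounded_ellipse (ha : 0 < a) (hb : 0 < b) : Bornology.IsBounded (ellipse a b) := by
  refine (Metric.isBounded_ball (x := (0 : ℝ²)) (r := √(2 / a + 2 / b))).subset fun x hx => ?_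
  have hx : a * x 0 ^ 2 + b * x 1 ^ 2 < 2 := hx
  have h0 : x 0 ^ 2 < 2 / a := by rw [lt_div_iff₀ ha]; nlinarith [sq_nonneg (x 1)]
  have h1 : x 1 ^ 2 < 2 / b := by rw [lt_div_iff₀ hb]; nlinarith [sq_nonneg (x 0)]
  rw [mem_ball_zero_iff, ← sqrt_sq (norm_nonneg x), real_norm_sq_eq, Fin.sum_univ_two]
  exact sqrt_lt_sqrt (by positivity) (by linarith)

theorem ellipseNormalizer_apply (x : ℝ²) (i : Fin 2) :
    ellipseNormalizer a b x i = ![√(a / 2), √(b / 2)] i * x i := by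
  fin_cases i <;> simp [ellipseNormalizer, Matrix.toLpLin_apply]

theorem ellipse_eq_preimage_ball (ha : 0 ≤ a) (hb : 0 ≤ b) :
    ellipse a b = ellipseNormalizer a b ⁻¹' Metric.ball 0 1 := by
  ext x
  rw [ellipse, Set.mem_ofPred_eq, ellipseForm, Set.mem_preimage, mem_ball_zero_iff,
    ← sq_lt_one_iff₀ (norm_nonneg _), real_norm_sq_eq, Fin.sum_univ_two,
    ellipseNormalizer_apply, ellipseNormalizer_apply]
  simp only [Matrix.cons_val_zero, Matrix.cons_val_one, mul_pow,
    sq_sqrt (div_nonneg ha zero_le_two), sq_sqrt (div_nonneg hb zero_le_two)]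
  constructor <;> intro <;> linarith

theorem det_ellipseNormalizer (ha : 0 ≤ a) :
    LinearMap.det (ellipseNormalizer a b) = √(a * b) / 2 := by
  rw [ellipseNormalizer, Matrix.toLpLin_eq_toLin, LinearMap.det_toLin, Matrix.det_diagonal,
    Fin.prod_univ_two]
  simp only [Matrix.cons_val_zero, Matrix.cons_val_one, sqrt_div' _ zero_le_two]
  rw [div_mul_div_comm, ← sqrt_mul ha, mul_self_sqrt zero_le_two]

theorem volume_ellipse (ha : 0 < a) (hb : 0 < b) :
    volume (ellipse a b) = ENNReal.ofReal (2 * π / √(a * b)) := by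
  have hab : 0 < √(a * b) := by positivity
  rw [ellipse_eq_preimage_ball ha.le hb.le, Measure.addHaar_preimage_linearMap _
    (by rw [det_ellipseNormalizer ha.le]; positivity), det_ellipseNormalizer ha.le,
    volume_ball_fin_two, abs_of_pos (by positivity), ENNReal.ofReal_one, one_pow, one_mul,
    ← ENNReal.ofReal_mul (by positivity)]
  congr 1
  field_simp

end Ellipse

/-- `|∇u|` at the vertex `(√(2 / a), 0)` over `|Ω|^{1/2}`, for `Ω = ellipse a (1 - a)`. -/
noncomputable def ellipseGradientRatio (a : ℝ) : ℝ := √(2 * a) / √(2 * π / √(a * (1 - a)))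

theorem ellipseGradientRatio_three_fourths :
    ellipseGradientRatio (3 / 4) = (3 : ℝ) ^ ((3 : ℝ) / 4) / (4 * √π) := by
  have h3 : ((3 : ℝ) ^ ((3 : ℝ) / 4)) ^ 2 = 3 * √3 := by
    rw [← rpow_natCast, ← rpow_mul (by norm_num), sqrt_eq_rpow,
      ← rpow_one_add' (by norm_num) (by norm_num)]
    norm_num
  have h16 : √(3 / 4 * (1 - 3 / 4) : ℝ) = √3 / 4 := by
    rw [show (3 / 4 * (1 - 3 / 4) : ℝ) = 3 / 4 ^ 2 by norm_num, sqrt_div' _ (by norm_num),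
      sqrt_sq (by norm_num)]
  rw [ellipseGradientRatio, ← sq_eq_sq₀ (by positivity) (by positivity), div_pow, div_pow, h3,
    mul_pow, sq_sqrt pi_pos.le, sq_sqrt (by norm_num), sq_sqrt (by positivity), h16]
  field_simp

def IsTorsionGradientBound (c : ℝ) : Prop :=
  ∀ Ω : Set ℝ², Convex ℝ Ω → IsOpen Ω → Bornology.IsBounded Ω → Ω.Nonempty →
    ∀ u : ℝ² → ℝ, ContDiffOn ℝ 2 u (closure Ω) →
      (∀ x ∈ Ω, -planeLaplacian u x = 1) →
      (∀ x ∈ frontier Ω, u x = 0) →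
      ∀ x ∈ Ω, ‖fderiv ℝ u x‖ ≤ c * √(volume Ω).toReal

theorem IsTorsionGradientBound.ellipseGradientRatio_le {c a : ℝ} (hc : IsTorsionGradientBound c)
    (ha : 0 < a) (ha' : a < 1) : ellipseGradientRatio a ≤ c := by
  have hb : 0 < 1 - a := sub_pos.2 ha'
  have hbound := hc (ellipse a (1 - a)) (convex_ellipse ha.le hb.le) (isOpen_ellipse _ _)
    (isBounded_ellipse ha hb) ⟨0, single_zero_mem_ellipse (r := 0) (by simp)⟩
    (ellipseTorsion a (1 - a)) (contDiff_ellipseTorsion _ _).contDiffOn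
    (fun x _ => by rw [planeLaplacian_ellipseTorsion]; ring)
    (fun _ hx => ellipseTorsion_eq_zero_of_mem_frontier _ _ hx)
  rw [volume_ellipse ha hb, ENNReal.toReal_ofReal (by positivity)] at hbound
  rw [ellipseGradientRatio, div_le_iff₀ (by positivity)]
  refine le_of_forall_lt_imp_le_of_dense fun s hs => ?_
  have hs' : max s 0 ^ 2 < 2 * a := (lt_sqrt (le_max_right s 0)).1 (max_lt hs (by positivity))
  have hr : a * (max s 0 / a) ^ 2 < 2 := by
    field_simp
    linarith
  calc s ≤ |a * (max s 0 / a)| := by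
        rw [mul_div_cancel₀ _ ha.ne']
        exact (le_max_left s 0).trans (le_abs_self _)
    _ ≤ ‖fderiv ℝ (ellipseTorsion a (1 - a)) (single 0 (max s 0 / a))‖ := by
        simpa using abs_mul_le_norm_fderiv_ellipseTorsion (single 0 (max s 0 / a))
    _ ≤ _ := hbound _ (single_zero_mem_ellipse hr)

/-- The best constant `c` in `‖∇u‖_∞ ≤ c·|Ω|^{1/2}`, valid for all bounded convex
planar domains `Ω` with `u` the torsion function (`-Δu = 1`, `u = 0` on `∂Ω`),
satisfies `c ≥ 3^{3/4}/(4√π)`. -/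
theorem torsion_gradient_best_constant_lower_bound (c : ℝ)
    (hc : ∀ Ω : Set (EuclideanSpace ℝ (Fin 2)), Convex ℝ Ω → IsOpen Ω →
      Bornology.IsBounded Ω → Ω.Nonempty →
      ∀ u : EuclideanSpace ℝ (Fin 2) → ℝ, ContDiffOn ℝ 2 u (closure Ω) →
        (∀ x ∈ Ω, -planeLaplacian u x = 1) →
        (∀ x ∈ frontier Ω, u x = 0) →
        ∀ x ∈ Ω, ‖fderiv ℝ u x‖ ≤ c * Real.sqrt (volume Ω).toReal) :
    (3 : ℝ) ^ ((3 : ℝ) / 4) / (4 * Real.sqrt π) ≤ c := by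
  rw [← ellipseGradientRatio_three_fourths]
  exact IsTorsionGradientBound.ellipseGradientRatio_le hc (by norm_num) (by norm_num)
end

section
/- If u : Ω → ℝ is differentiable with u(x₀) = ‖u‖_∞ and satisfies |∇u(x)| ≤ 2√(‖u‖_∞ - u(x)) for all x ∈ Ω (Ω convex), then for every x ∈ Ω, ‖u‖_∞ ≤ ‖x - x₀‖² + u(x). -/
/-!
The gradient bound says exactly that `√(M - u)` has gradient of norm at most `1`, where
`M = u x₀`; so `√(M - u)` is `1`-Lipschitz on the convex set `Ω`, and since it vanishes at `x₀`,
`√(M - u x) ≤ ‖x - x₀‖`. As `√(M - u)` need not be differentiable where `u = M`, the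
mean value inequality is applied to `√(M + ε - u)` and then `ε → 0⁺`.
-/

open Real Filter Topology

theorem LipschitzOnWith.of_tendsto {α β ι : Type*} [PseudoEMetricSpace α] [PseudoEMetricSpace β]
    {l : Filter ι} [l.NeBot] {F : ι → α → β} {f : α → β} {K : NNReal} {s : Set α}
    (hF : ∀ᶠ i in l, LipschitzOnWith K (F i) s)
    (hlim : ∀ x ∈ s, Tendsto (fun i ↦ F i x) l (𝓝 (f x))) :
    LipschitzOnWith K f s := fun x hx y hy ↦
  le_of_tendsto ((hlim x hx).edist (hlim y hy)) (hF.mono fun _ hi ↦ hi hx hy)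

section

variable {E : Type*} [NormedAddCommGroup E] [NormedSpace ℝ E] {Ω : Set E} {u : E → ℝ} {M : ℝ}

theorem lipschitzOnWith_sqrt_add_sub (hΩ : Convex ℝ Ω) (hdiff : ∀ x ∈ Ω, DifferentiableAt ℝ u x)
    (hle : ∀ x ∈ Ω, u x ≤ M) (hgrad : ∀ x ∈ Ω, ‖fderiv ℝ u x‖ ≤ 2 * √(M - u x))
    {ε : ℝ} (hε : 0 < ε) :
    LipschitzOnWith 1 (fun x ↦ √(M + ε - u x)) Ω := by
  have hpos : ∀ x ∈ Ω, 0 < M + ε - u x := fun x hx ↦ by linarith [hle x hx]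
  refine hΩ.lipschitzOnWith_of_nnnorm_hasFDerivWithin_le (fun x hx ↦
    (((hdiff x hx).hasFDerivAt.const_sub (M + ε)).sqrt (hpos x hx).ne').hasFDerivWithinAt)
    fun x hx ↦ ?_
  rw [← NNReal.coe_le_coe, coe_nnnorm, norm_smul, norm_neg, NNReal.coe_one]
  have hs : 0 < √(M + ε - u x) := sqrt_pos.2 (hpos x hx)
  calc ‖1 / (2 * √(M + ε - u x))‖ * ‖fderiv ℝ u x‖
      ≤ 1 / (2 * √(M + ε - u x)) * (2 * √(M + ε - u x)) := by
        rw [Real.norm_of_nonneg (by positivity)]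
        gcongr
        exact (hgrad x hx).trans (by gcongr; linarith)
    _ = 1 := by field_simp

theorem lipschitzOnWith_sqrt_sub (hΩ : Convex ℝ Ω) (hdiff : ∀ x ∈ Ω, DifferentiableAt ℝ u x)
    (hle : ∀ x ∈ Ω, u x ≤ M) (hgrad : ∀ x ∈ Ω, ‖fderiv ℝ u x‖ ≤ 2 * √(M - u x)) :
    LipschitzOnWith 1 (fun x ↦ √(M - u x)) Ω := by
  refine .of_tendsto (l := 𝓝[>] (0 : ℝ))
    (eventually_nhdsWithin_of_forall fun ε hε ↦ lipschitzOnWith_sqrt_add_sub hΩ hdiff hle hgrad hε)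
    fun x _ ↦ ?_
  have : Continuous fun ε : ℝ ↦ √(M + ε - u x) := by fun_prop
  simpa using (this.tendsto 0).mono_left nhdsWithin_le_nhds

end

/-- If `u` is differentiable on a convex `Ω ⊂ ℝ²`, attains its maximum at `x₀ ∈ Ω`,
and satisfies `|∇u(x)| ≤ 2√(‖u‖_∞ - u(x))` on `Ω`, then for every `x ∈ Ω`,
`‖u‖_∞ ≤ ‖x - x₀‖² + u(x)`. -/
theorem max_bound_from_gradient_bound
    (Ω : Set (EuclideanSpace ℝ (Fin 2))) (hConv : Convex ℝ Ω)
    (u : EuclideanSpace ℝ (Fin 2) → ℝ)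
    (hdiff : ∀ x ∈ Ω, DifferentiableAt ℝ u x)
    (x₀ : EuclideanSpace ℝ (Fin 2)) (hx₀ : x₀ ∈ Ω)
    (hmax : ∀ x ∈ Ω, u x ≤ u x₀)
    (hgrad : ∀ x ∈ Ω, ‖fderiv ℝ u x‖ ≤ 2 * Real.sqrt (u x₀ - u x)) :
    ∀ x ∈ Ω, u x₀ ≤ ‖x - x₀‖ ^ 2 + u x := by
  intro x hx
  have hdist : √(u x₀ - u x) ≤ ‖x - x₀‖ := by
    simpa [abs_of_nonneg (sqrt_nonneg _)] using
      (lipschitzOnWith_sqrt_sub hConv hdiff hmax hgrad).norm_sub_le hx hx₀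
  linarith [(sqrt_le_iff.1 hdist).2]
end
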